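/- For any finitely supported real sequence (u_n)_{n≥0} with u_0 = 0, the discrete Hardy inequality holds: ∑_{n≥1} (u_n - u_{n-1})² ≥ (1/4) ∑_{n≥1} u_n²/n². -/

import Mathlib

/-!
Ground state argument: for a weight `w > 0`, the identity
`x y (b - a)² - (x y - x²) b² - (x y - y²) a² = (x b - y a)²` with `x = w (n-1)`, `y = w n`,
summed over the edges of `ℕ`, gives `∑ (∇u)² ≥ ∑ V u²` with the Hardy weight `V = -(Δw)/w`.
For `w n = √n` one has `V n = 2 - √(1 - 1/n) - √(1 + 1/n) ≥ 1/(4 n²)`.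
-/

theorem sq_mul_add_sq_mul_le_sq_sub {x y : ℝ} (hx : 0 < x) (hy : 0 < y) (a b : ℝ) :
    (1 - x / y) * b ^ 2 + (1 - y / x) * a ^ 2 ≤ (b - a) ^ 2 := by
  have key : x * y * ((b - a) ^ 2 - ((1 - x / y) * b ^ 2 + (1 - y / x) * a ^ 2))
      = (x * b - y * a) ^ 2 := by
    field_simp
    ring
  have := sq_nonneg (x * b - y * a)
  rw [← key] at this
  exact sub_nonneg.mp (nonneg_of_mul_nonneg_right this (by positivity))

/-- The Hardy weight `-(Δw)/w` of `w`, taken at the vertex `n + 1`. -/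
noncomputable def hardyWeight (w : ℕ → ℝ) (n : ℕ) : ℝ :=
  (2 * w (n + 1) - w n - w (n + 2)) / w (n + 1)

noncomputable def groundStateCorrection (w u : ℕ → ℝ) (n : ℕ) : ℝ :=
  (w (n + 1) / w n - 1) * u n ^ 2

theorem hardyWeight_mul_sq_add_sub_le {w : ℕ → ℝ} (hw0 : 0 ≤ w 0) (hw : ∀ n, 0 < w (n + 1))
    {u : ℕ → ℝ} (hu0 : u 0 = 0) (n : ℕ) :
    hardyWeight w n * u (n + 1) ^ 2
        + (groundStateCorrection w u (n + 1) - groundStateCorrection w u n)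
      ≤ (u (n + 1) - u n) ^ 2 := by
  have hw1 := hw n
  have hsplit : hardyWeight w n * u (n + 1) ^ 2
        + (groundStateCorrection w u (n + 1) - groundStateCorrection w u n)
      = (1 - w n / w (n + 1)) * u (n + 1) ^ 2 + (1 - w (n + 1) / w n) * u n ^ 2 := by
    unfold hardyWeight groundStateCorrection
    field_simp
    ring
  rw [hsplit]
  rcases n with _ | n
  · have : 0 ≤ w 0 / w 1 := div_nonneg hw0 hw1.le
    simp only [hu0]
    nlinarith [sq_nonneg (u 1)]
  · exact sq_mul_add_sq_mul_le_sq_sub (hw n) hw1 _ _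

theorem sum_range_hardyWeight_mul_sq_le {w : ℕ → ℝ} (hw0 : 0 ≤ w 0)
    (hw : ∀ n, 0 < w (n + 1)) {u : ℕ → ℝ} (hu0 : u 0 = 0) {N : ℕ} (huN : u N = 0) :
    ∑ n ∈ Finset.range N, hardyWeight w n * u (n + 1) ^ 2
      ≤ ∑ n ∈ Finset.range N, (u (n + 1) - u n) ^ 2 := by
  set G := groundStateCorrection w u
  have htel : ∑ n ∈ Finset.range N, (G (n + 1) - G n) = 0 := by
    rw [Finset.sum_range_sub]
    simp [G, groundStateCorrection, hu0, huN]
  calc ∑ n ∈ Finset.range N, hardyWeight w n * u (n + 1) ^ 2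
      = ∑ n ∈ Finset.range N, (hardyWeight w n * u (n + 1) ^ 2 + (G (n + 1) - G n)) := by
        rw [Finset.sum_add_distrib, htel, add_zero]
    _ ≤ ∑ n ∈ Finset.range N, (u (n + 1) - u n) ^ 2 :=
        Finset.sum_le_sum fun n _ => hardyWeight_mul_sq_add_sub_le hw0 hw hu0 n

theorem sqrt_sub_one_add_sqrt_add_one_le {M : ℝ} (hM : 1 ≤ M) :
    √(M - 1) + √(M + 1) ≤ (2 - 1 / (4 * M ^ 2)) * √M := by
  have hM0 : 0 < M := by linarith
  have hprod : √(M - 1) * √(M + 1) ≤ M - 1 / (2 * M) := by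
    have : 1 / (2 * M) ≤ M := by rw [div_le_iff₀ (by positivity)]; nlinarith
    rw [← Real.sqrt_mul (by linarith), Real.sqrt_le_left (by linarith)]
    field_simp
    nlinarith
  have hcoef : 1 / (4 * M ^ 2) ≤ 2 := by rw [div_le_iff₀ (by positivity)]; nlinarith
  rw [← pow_le_pow_iff_left₀ (by positivity) (by nlinarith [Real.sqrt_nonneg M]) two_ne_zero,
    add_sq, mul_pow, Real.sq_sqrt (by linarith), Real.sq_sqrt (by linarith), Real.sq_sqrt hM0.le]
  have : (2 - 1 / (4 * M ^ 2)) ^ 2 * M = 2 * M + 2 * (M - 1 / (2 * M)) + 1 / (16 * M ^ 3) := by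
    field_simp
    ring
  rw [this]
  have : 0 < 1 / (16 * M ^ 3) := by positivity
  linarith

theorem inv_four_mul_sq_le_hardyWeight_sqrt (n : ℕ) :
    1 / (4 * ((n : ℝ) + 1) ^ 2) ≤ hardyWeight (fun k => √k) n := by
  have h := sqrt_sub_one_add_sqrt_add_one_le (M := (n : ℝ) + 1) (by simp)
  have hpos : 0 < √((n : ℝ) + 1) := Real.sqrt_pos.2 (by positivity)
  rw [hardyWeight, le_div_iff₀ (by exact_mod_cast hpos)]
  push_cast
  rw [add_sub_cancel_right, show (n : ℝ) + 1 + 1 = n + 2 by ring] at h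
  linarith

theorem discrete_hardy (u : ℕ → ℝ) (hfin : ∃ N, ∀ n ≥ N, u n = 0) (h0 : u 0 = 0) :
    ∑' n : ℕ, (u (n + 1) - u n) ^ 2 ≥
      (1 / 4) * ∑' n : ℕ, (u (n + 1)) ^ 2 / ((n : ℝ) + 1) ^ 2 := by
  obtain ⟨N, hN⟩ := hfin
  have hvanish : ∀ n ∉ Finset.range N, u n = 0 ∧ u (n + 1) = 0 := fun n hn => by
    simp only [Finset.mem_range, not_lt] at hn
    exact ⟨hN n hn, hN (n + 1) (by omega)⟩
  rw [tsum_eq_sum fun n hn => by simp [hvanish n hn],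
    tsum_eq_sum fun n hn => by simp [hvanish n hn], Finset.mul_sum]
  calc ∑ n ∈ Finset.range N, 1 / 4 * (u (n + 1) ^ 2 / ((n : ℝ) + 1) ^ 2)
      ≤ ∑ n ∈ Finset.range N, hardyWeight (fun k => √k) n * u (n + 1) ^ 2 :=
        Finset.sum_le_sum fun n _ => by
          rw [show 1 / 4 * (u (n + 1) ^ 2 / ((n : ℝ) + 1) ^ 2)
              = 1 / (4 * ((n : ℝ) + 1) ^ 2) * u (n + 1) ^ 2 by field_simp]
          gcongr
          exact inv_four_mul_sq_le_hardyWeight_sqrt n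
    _ ≤ ∑ n ∈ Finset.range N, (u (n + 1) - u n) ^ 2 :=
        sum_range_hardyWeight_mul_sq_le (by simp) (fun n => Real.sqrt_pos.2 (by positivity)) h0
          (hN N le_rfl)
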